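/- arXiv:1910.14480 — 5 statements merged into one kernel-verified Lean document; each statement's English description precedes it below -/
import Mathlib

section
/- For all positive integers a and b, every family of at least b!·a^b + 1 distinct finite sets, each of cardinality at most b, contains a sunflower with more than a members. -/
/-!
Erdős–Rado. Take a maximal pairwise disjoint subfamily `D` of the nonempty sets; it is a sunflower
with empty centre, so if there is no sunflower with more than `a` members then `#D ≤ a`, and the
at most `a * b` points of `⋃ D` meet every nonempty set of the family. Some point therefore lies
in more than `(b - 1)! * a ^ (b - 1)` sets, and induction on `b` applied to these sets with the
point removed gives a sunflower, to which the point is added back.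
-/

open scoped Nat

namespace Finset

variable {α : Type*} [DecidableEq α]

def IsSunflower (T : Finset (Finset α)) : Prop :=
  ∃ t, (T : Set (Finset α)).Pairwise fun u v => u ∩ v = t

theorem IsSunflower.of_pairwiseDisjoint {T : Finset (Finset α)}
    (hT : (T : Set (Finset α)).PairwiseDisjoint id) : T.IsSunflower :=
  ⟨∅, fun _ hu _ hv huv => disjoint_iff_inter_eq_empty.1 (hT hu hv huv)⟩

theorem IsSunflower.image_insert {T : Finset (Finset α)} (hT : T.IsSunflower) (x : α) :
    (T.image (insert x)).IsSunflower := by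
  obtain ⟨t, ht⟩ := hT
  refine ⟨insert x t, ?_⟩
  rintro _ hu' _ hv' huv
  obtain ⟨u, hu, rfl⟩ := mem_image.1 hu'
  obtain ⟨v, hv, rfl⟩ := mem_image.1 hv'
  rw [← insert_inter_distrib, ht hu hv (ne_of_apply_ne _ huv)]

theorem card_image_insert {T : Finset (Finset α)} {x : α} (hx : ∀ v ∈ T, x ∉ v) :
    #(T.image (insert x)) = #T :=
  card_image_of_injOn fun u hu v hv huv => by
    rw [← erase_insert (hx u hu), ← erase_insert (hx v hv)]
    exact congrArg (erase · x) huv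

def link (S : Finset (Finset α)) (x : α) : Finset (Finset α) :=
  {u ∈ S | x ∈ u}.image (erase · x)

theorem mem_link {S : Finset (Finset α)} {x : α} {v : Finset α} :
    v ∈ S.link x ↔ x ∉ v ∧ insert x v ∈ S := by
  constructor
  · intro hv
    obtain ⟨u, hu, rfl⟩ := mem_image.1 hv
    rw [mem_filter] at hu
    exact ⟨notMem_erase x u, by rw [insert_erase hu.2]; exact hu.1⟩
  · rintro ⟨hxv, hv⟩
    exact mem_image.2 ⟨insert x v, mem_filter.2 ⟨hv, mem_insert_self x v⟩, erase_insert hxv⟩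

theorem card_link (S : Finset (Finset α)) (x : α) : #(S.link x) = #{u ∈ S | x ∈ u} :=
  card_image_of_injOn fun _ hu _ hv => erase_injOn' x (mem_filter.1 hu).2 (mem_filter.1 hv).2

theorem exists_maximal_pairwiseDisjoint_subset (S : Finset (Finset α)) :
    ∃ D ⊆ S, (D : Set (Finset α)).PairwiseDisjoint id ∧
      ∀ u ∈ S, (∀ v ∈ D, Disjoint u v) → u ∈ D := by
  classical
  set P := S.powerset.filter fun D : Finset (Finset α) => (D : Set (Finset α)).PairwiseDisjoint id
  obtain ⟨D, hD, hmax⟩ := exists_max_image P card ⟨∅, by simp [P]⟩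
  rw [mem_filter, mem_powerset] at hD
  refine ⟨D, hD.1, hD.2, fun u hu hdisj => ?_⟩
  by_contra huD
  have hins : insert u D ∈ P := by
    rw [mem_filter, mem_powerset, coe_insert]
    exact ⟨insert_subset hu hD.1, hD.2.insert fun v hv _ => hdisj v hv⟩
  have := hmax _ hins
  rw [card_insert_of_notMem huD] at this
  omega

theorem card_le_of_nonempty_of_pairwiseDisjoint_le {S : Finset (Finset α)} {n c m : ℕ}
    (hne : ∀ u ∈ S, u.Nonempty) (hsize : ∀ u ∈ S, #u ≤ n)
    (hdisj : ∀ D ⊆ S, (D : Set (Finset α)).PairwiseDisjoint id → #D ≤ c)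
    (hdeg : ∀ x, #{u ∈ S | x ∈ u} ≤ m) : #S ≤ n * c * m := by
  obtain ⟨D, hDS, hD, hmax⟩ := exists_maximal_pairwiseDisjoint_subset S
  set A := D.biUnion id
  have hA : #A ≤ n * c :=
    calc #A ≤ #D * n := card_biUnion_le_card_mul _ _ _ fun u hu => hsize u (hDS hu)
      _ ≤ n * c := by rw [mul_comm]; exact Nat.mul_le_mul_left n (hdisj D hDS hD)
  have hcover : S ⊆ A.biUnion fun x => {u ∈ S | x ∈ u} := by
    intro u hu
    obtain ⟨x, hx⟩ : (u ∩ A).Nonempty := by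
      rw [← not_disjoint_iff_nonempty_inter]
      intro h
      have huD := hmax u hu fun v hv => h.mono_right (subset_biUnion_of_mem id hv)
      exact (hne u hu).ne_empty (disjoint_self.1 (h.mono_right (subset_biUnion_of_mem id huD)))
    obtain ⟨hxu, hxA⟩ := mem_inter.1 hx
    exact mem_biUnion.2 ⟨x, hxA, mem_filter.2 ⟨hu, hxu⟩⟩
  calc #S ≤ #(A.biUnion fun x => {u ∈ S | x ∈ u}) := card_le_card hcover
    _ ≤ #A * m := card_biUnion_le_card_mul _ _ _ fun x _ => hdeg x
    _ ≤ n * c * m := Nat.mul_le_mul_right m hA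

theorem card_le_of_pairwiseDisjoint_le {S : Finset (Finset α)} {n c m : ℕ} (hn : 0 < n)
    (hm : 0 < m) (hsize : ∀ u ∈ S, #u ≤ n)
    (hdisj : ∀ D ⊆ S, (D : Set (Finset α)).PairwiseDisjoint id → #D ≤ c)
    (hdeg : ∀ x, #{u ∈ S | x ∈ u} ≤ m) : #S ≤ n * c * m := by
  by_cases h0 : ∅ ∈ S
  -- `∅` can be added to any disjoint subfamily, so the nonempty sets satisfy the bound with
  -- `c - 1`, which leaves room for `∅` itself.
  · have hdisj' : ∀ D ⊆ S.erase ∅, (D : Set (Finset α)).PairwiseDisjoint id → #D + 1 ≤ c := by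
      intro D hD hDd
      rw [← card_insert_of_notMem fun h => notMem_erase ∅ S (hD h)]
      refine hdisj _ (insert_subset h0 (hD.trans (erase_subset _ _))) ?_
      rw [coe_insert]
      exact hDd.insert fun v _ _ => disjoint_bot_left
    obtain ⟨c, rfl⟩ : ∃ c', c = c' + 1 :=
      ⟨c - 1, by have := hdisj' ∅ (empty_subset _) (by simp); omega⟩
    have := card_le_of_nonempty_of_pairwiseDisjoint_le (c := c)
      (fun u hu => nonempty_iff_ne_empty.2 (ne_of_mem_erase hu))
      (fun u hu => hsize u (mem_of_mem_erase hu)) (fun D hD hDd => by have := hdisj' D hD hDd; omega)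
      (fun x => (card_le_card (filter_subset_filter _ (erase_subset _ _))).trans (hdeg x))
    rw [← card_erase_add_one h0]
    nlinarith
  · refine card_le_of_nonempty_of_pairwiseDisjoint_le (fun u hu => ?_) hsize hdisj hdeg
    exact nonempty_iff_ne_empty.2 fun h => h0 (h ▸ hu)

theorem exists_isSunflower_card_gt {a : ℕ} (ha : 0 < a) :
    ∀ (b : ℕ) (S : Finset (Finset α)), (∀ u ∈ S, #u ≤ b) → b ! * a ^ b < #S →
      ∃ T ⊆ S, a < #T ∧ T.IsSunflower
  | 0, S, hsize, hcard => by
    have := card_le_card fun u hu => mem_singleton.2 (card_eq_zero.1 (Nat.le_zero.1 (hsize u hu)))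
    simp only [Nat.factorial_zero, pow_zero, one_mul, card_singleton] at hcard this
    omega
  | b + 1, S, hsize, hcard => by
    by_contra! hsmall
    obtain ⟨x, hx⟩ : ∃ x, b ! * a ^ b < #{u ∈ S | x ∈ u} := by
      by_contra! hdeg
      have := card_le_of_pairwiseDisjoint_le b.succ_pos (by positivity) hsize
        (fun D hD hDd => not_lt.1 fun h => hsmall D hD h (.of_pairwiseDisjoint hDd)) hdeg
      rw [Nat.factorial_succ, pow_succ] at hcard
      nlinarith
    obtain ⟨T, hT, hTcard, hTsun⟩ := exists_isSunflower_card_gt ha b (S.link x)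
      (fun v hv => by
        have := hsize _ (mem_link.1 hv).2
        rw [card_insert_of_notMem (mem_link.1 hv).1] at this
        omega)
      (by rwa [card_link])
    have hxT : ∀ v ∈ T, x ∉ v := fun v hv => (mem_link.1 (hT hv)).1
    refine hsmall (T.image (insert x)) (fun u hu => ?_) (by rwa [card_image_insert hxT])
      (hTsun.image_insert x)
    obtain ⟨v, hv, rfl⟩ := mem_image.1 hu
    exact (mem_link.1 (hT hv)).2

end Finset

theorem sunflower_lemma_general {α : Type*} [DecidableEq α] (a b : ℕ) (ha : 0 < a)
    (S : Finset (Finset α)) (hcard : Nat.factorial b * a ^ b + 1 ≤ S.card)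
    (hsize : ∀ u ∈ S, u.card ≤ b) :
    ∃ T ⊆ S, a < T.card ∧ ∃ t : Finset α, ∀ u ∈ T, ∀ v ∈ T, u ≠ v → u ∩ v = t := by
  obtain ⟨T, hTS, hT, t, ht⟩ := Finset.exists_isSunflower_card_gt ha b S hsize hcard
  exact ⟨T, hTS, hT, t, ht⟩

/-- **Sunflower lemma** (Erdős–Rado). For all positive integers `a` and `b`, every family of
at least `b! * a ^ b + 1` distinct finite sets, each of cardinality at most `b`, contains a
sunflower with more than `a` members, i.e. a subfamily `T` with `a < T.card` such that for some
set `t` (the centre), `u ∩ v = t` for all distinct `u, v ∈ T`. -/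
theorem sunflower_lemma {α : Type*} [DecidableEq α] (a b : ℕ) (ha : 0 < a) (hb : 0 < b)
    (S : Finset (Finset α)) (hcard : Nat.factorial b * a ^ b + 1 ≤ S.card)
    (hsize : ∀ u ∈ S, u.card ≤ b) :
    ∃ T ⊆ S, a < T.card ∧ ∃ t : Finset α, ∀ u ∈ T, ∀ v ∈ T, u ≠ v → u ∩ v = t :=
  sunflower_lemma_general a b ha S hcard hsize
end

section
/- If b > 1 is a natural number and X is an infinite collection of distinct sets each of cardinality exactly b, then there exists a finite set t ⊆ ⋃X such that for every positive integer a there is a subset of X of cardinality a which is a sunflower with centre t. -/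
theorem aux_sunflower {α : Type*} [DecidableEq α] :
    ∀ b (X : Set (Finset α)), X.Infinite → (∀ u ∈ X, u.card = b) →
    ∃ t : Finset α, ((t : Set α) ⊆ ⋃ u ∈ X, (u : Set α)) ∧
      ∀ a : ℕ, 0 < a → ∃ Y : Finset (Finset α), ↑Y ⊆ X ∧ Y.card = a ∧
        ∀ u ∈ Y, ∀ v ∈ Y, u ≠ v → u ∩ v = t := by
  intro b
  induction b using Nat.strong_induction_on with
  | _ b ih =>
    intro X hX hsize
    by_cases hx : ∃ x : α, {u ∈ X | x ∈ u}.Infinite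
    · obtain ⟨x, hxinf⟩ := hx
      obtain ⟨u₀, hu₀X, hxu₀⟩ := hxinf.nonempty
      have hbpos : 0 < b := by
        have := hsize u₀ hu₀X
        have := Finset.card_pos.mpr ⟨x, hxu₀⟩
        omega
      set X' : Set (Finset α) := (fun u => u.erase x) '' {u ∈ X | x ∈ u} with hX'
      have hinj : Set.InjOn (fun u => u.erase x) {u ∈ X | x ∈ u} := by
        intro u hu v hv h
        have := congrArg (insert x) h
        simpa [Finset.insert_erase hu.2, Finset.insert_erase hv.2] using this
      have hX'inf : X'.Infinite := Set.Infinite.image hinj hxinf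
      have hX'size : ∀ u ∈ X', u.card = b - 1 := by
        rintro _ ⟨u, ⟨huX, hxu⟩, rfl⟩
        rw [Finset.card_erase_of_mem hxu, hsize u huX]
      obtain ⟨t', ht'sub, ht'⟩ := ih (b - 1) (by omega) X' hX'inf hX'size
      refine ⟨insert x t', ?_, ?_⟩
      · intro y hy
        simp only [Finset.coe_insert, Set.mem_insert_iff] at hy
        rcases hy with rfl | hy
        · exact Set.mem_biUnion hu₀X hxu₀
        · obtain ⟨s, hs⟩ := Set.mem_iUnion.mp (ht'sub hy)
          simp only [Set.mem_iUnion] at hs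
          obtain ⟨hsX', hys⟩ := hs
          obtain ⟨u, ⟨huX, hxu⟩, rfl⟩ := hsX'
          exact Set.mem_biUnion huX (Finset.mem_of_mem_erase hys)
      · intro a ha
        obtain ⟨Y', hY'sub, hY'card, hY'⟩ := ht' a ha
        have hnox : ∀ v ∈ Y', x ∉ v := by
          intro v hv
          obtain ⟨u, _, rfl⟩ := hY'sub hv
          exact Finset.notMem_erase x u
        have hmemX : ∀ v ∈ Y', insert x v ∈ X := by
          intro v hv
          obtain ⟨u, ⟨huX, hxu⟩, rfl⟩ := hY'sub hv
          rwa [Finset.insert_erase hxu]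
        refine ⟨Y'.image (insert x), ?_, ?_, ?_⟩
        · intro v hv
          simp only [Finset.coe_image, Set.mem_image, Finset.mem_coe] at hv
          obtain ⟨w, hw, rfl⟩ := hv
          exact hmemX w hw
        · rw [Finset.card_image_of_injOn, hY'card]
          intro u hu v hv h
          have hxu := hnox u hu
          have hxv := hnox v hv
          have := congrArg (Finset.erase · x) h
          simpa [Finset.erase_insert hxu, Finset.erase_insert hxv] using this
        · intro u hu v hv huv
          simp only [Finset.mem_image] at hu hv
          obtain ⟨u', hu', rfl⟩ := hu
          obtain ⟨v', hv', rfl⟩ := hv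
          have hne : u' ≠ v' := by rintro rfl; exact huv rfl
          have : insert x u' ∩ insert x v' = insert x (u' ∩ v') := by
            ext y; simp only [Finset.mem_inter, Finset.mem_insert]; tauto
          rw [this, hY' u' hu' v' hv' hne]
    · push_neg at hx
      refine ⟨∅, by simp, ?_⟩
      have key : ∀ a : ℕ, ∃ Y : Finset (Finset α), ↑Y ⊆ X ∧ Y.card = a ∧
          ∀ u ∈ Y, ∀ v ∈ Y, u ≠ v → u ∩ v = ∅ := by
        intro a
        induction a with
        | zero => exact ⟨∅, by simp, by simp, by simp⟩
        | succ n ihn =>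
          obtain ⟨Y, hYsub, hYcard, hYdisj⟩ := ihn
          have hBad : (↑Y ∪ ⋃ y ∈ (Y.biUnion id : Finset α), {u ∈ X | y ∈ u}).Finite := by
            apply Set.Finite.union Y.finite_toSet
            exact Set.Finite.biUnion (Y.biUnion id).finite_toSet (fun y _ => hx y)
          obtain ⟨u, huX, hugood⟩ := (hX.diff hBad).nonempty
          simp only [Set.mem_union, Set.mem_iUnion, not_or, not_exists] at hugood
          refine ⟨insert u Y, ?_, ?_, ?_⟩
          · intro v hv
            simp only [Finset.coe_insert, Set.mem_insert_iff] at hv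
            rcases hv with rfl | hv
            · exact huX
            · exact hYsub hv
          · rw [Finset.card_insert_of_notMem (fun h => hugood.1 h), hYcard]
          · have hudisj : ∀ v ∈ Y, u ∩ v = ∅ := by
              intro v hv
              rw [Finset.eq_empty_iff_forall_notMem]
              intro y hy
              have hyv : y ∈ Y.biUnion id := Finset.mem_biUnion.mpr ⟨v, hv, (Finset.mem_inter.mp hy).2⟩
              exact (hugood.2 y hyv) ⟨huX, (Finset.mem_inter.mp hy).1⟩
            intro w hw v hv hwv
            simp only [Finset.mem_insert] at hw hv
            rcases hw with rfl | hw <;> rcases hv with rfl | hv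
            · exact absurd rfl hwv
            · exact hudisj v hv
            · rw [Finset.inter_comm]; exact hudisj w hw
            · exact hYdisj w hw v hv hwv
      exact fun a _ => key a

/-- (Howard–Keremedis–Rubin–Rubin, in ZF.) If `b > 1` is a natural number and `X` is an infinite
collection of distinct sets, each of cardinality exactly `b`, then there is a finite set
`t ⊆ ⋃ X` such that for every positive integer `a` there is a subset of `X` of cardinality `a`
which is a sunflower with centre `t`. -/
theorem sunflowers_with_common_centre {α : Type*} [DecidableEq α] (b : ℕ) (hb : 1 < b)
    (X : Set (Finset α)) (hX : X.Infinite) (hsize : ∀ u ∈ X, u.card = b) :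
    ∃ t : Finset α, ((t : Set α) ⊆ ⋃ u ∈ X, (u : Set α)) ∧
      ∀ a : ℕ, 0 < a → ∃ Y : Finset (Finset α), ↑Y ⊆ X ∧ Y.card = a ∧
        ∀ u ∈ Y, ∀ v ∈ Y, u ≠ v → u ∩ v = t := by
  exact aux_sunflower b X hX hsize
end

section
/- Let A be a set and k a natural number. Then every antichain in Add(A,1) all of whose elements have domain of cardinality exactly k is finite. -/
/-- A condition in the forcing `Add(A,1)`: a partial function from `A` to `{0,1}` (represented
as `Bool`) with finite domain. -/
def Cond (A : Type*) : Type _ := {p : A → Option Bool // {a | p a ≠ none}.Finite}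

/-- The domain of a condition. -/
def Cond.dom {A : Type*} (p : Cond A) : Set A := {a | p.1 a ≠ none}

/-- `q` extends `p` iff `p ⊆ q` as partial functions (reverse inclusion order). -/
def Cond.Extends {A : Type*} (q p : Cond A) : Prop :=
  ∀ a b, p.1 a = some b → q.1 a = some b

/-- Two conditions are compatible iff they agree on the intersection of their domains
(equivalently, their union is again a partial function). -/
def Cond.Compatible {A : Type*} (p q : Cond A) : Prop :=
  ∀ a x y, p.1 a = some x → q.1 a = some y → x = y

/-!
Induction on `k`. Fix `p₀` in an antichain `C` of conditions with `k + 1`-element domains.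
Every other `q ∈ C` disagrees with `p₀` somewhere in the finite set `dom p₀`, so `C \ {p₀}` is
covered by the finitely many fibres `{q ∈ C | q a = some b}` with `a ∈ dom p₀`. Erasing `a` from
the conditions of such a fibre is injective and turns it into an antichain of conditions with
`k`-element domains, which is finite by induction.
-/

namespace Cond

variable {A : Type*}

def erase [DecidableEq A] (a : A) (q : Cond A) : Cond A :=
  ⟨Function.update q.1 a none, q.2.subset fun c hc => by
    by_cases h : c = a
    · subst h; simp at hc
    · simpa [h] using hc⟩

theorem dom_erase [DecidableEq A] (a : A) (q : Cond A) : (q.erase a).dom = q.dom \ {a} := by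
  ext c
  by_cases h : c = a <;> simp [dom, erase, h]

theorem erase_injOn [DecidableEq A] (a : A) (v : Option Bool) :
    Set.InjOn (erase a) {q : Cond A | q.1 a = v} := by
  intro q₁ (h₁ : q₁.1 a = v) q₂ (h₂ : q₂.1 a = v) h
  apply Subtype.ext
  calc q₁.1 = Function.update (q₁.erase a).1 a v := by
        rw [erase, Function.update_idem, ← h₁, Function.update_eq_self]
    _ = Function.update (q₂.erase a).1 a v := by rw [h]
    _ = q₂.1 := by rw [erase, Function.update_idem, ← h₂, Function.update_eq_self]

theorem compatible_of_erase [DecidableEq A] {a : A} {q₁ q₂ : Cond A} (ha : q₁.1 a = q₂.1 a)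
    (h : (q₁.erase a).Compatible (q₂.erase a)) : q₁.Compatible q₂ := by
  intro c x y hx hy
  by_cases hc : c = a
  · subst hc
    exact Option.some_inj.mp (hx.symm.trans (ha.trans hy))
  · exact h c x y (by simpa [erase, hc] using hx) (by simpa [erase, hc] using hy)

theorem compatible_of_dom_eq_empty {p : Cond A} (hp : p.dom = ∅) (q : Cond A) :
    p.Compatible q := by
  intro a x _ hx
  have ha : a ∈ p.dom := by simp [dom, hx]
  simp [hp] at ha

theorem exists_mem_dom_of_not_compatible {p q : Cond A} (h : ¬ p.Compatible q) :
    ∃ a ∈ p.dom, ∃ b, q.1 a = some b := by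
  simp only [Compatible, not_forall] at h
  obtain ⟨a, x, y, hx, hy, -⟩ := h
  exact ⟨a, by simp [dom, hx], y, hy⟩

theorem finite_of_isAntichain_of_ncard_dom_eq_zero {C : Set (Cond A)}
    (hC : IsAntichain Compatible C) (hdom : ∀ p ∈ C, p.dom.ncard = 0) : C.Finite := by
  refine Set.Subsingleton.finite fun p hp q hq => ?_
  by_contra hne
  exact hC hp hq hne <| compatible_of_dom_eq_empty ((Set.ncard_eq_zero p.2).mp (hdom p hp)) q

theorem finite_of_isAntichain_of_apply_eq {k : ℕ}
    (ih : ∀ D : Set (Cond A), IsAntichain Compatible D → (∀ p ∈ D, p.dom.ncard = k) → D.Finite)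
    {C : Set (Cond A)} (hC : IsAntichain Compatible C) (hdom : ∀ p ∈ C, p.dom.ncard = k + 1)
    (a : A) (b : Bool) (hCb : ∀ p ∈ C, p.1 a = some b) : C.Finite := by
  classical
  have hinj : Set.InjOn (erase a) C := (erase_injOn a (some b)).mono hCb
  refine Set.Finite.of_finite_image (ih _ ?_ ?_) hinj
  · refine hinj.pairwise_image.mpr fun p hp q hq hpq hcompat => hC hp hq hpq ?_
    exact compatible_of_erase ((hCb p hp).trans (hCb q hq).symm) hcompat
  · rintro _ ⟨p, hp, rfl⟩
    have ha : a ∈ p.dom := by simp [dom, hCb p hp]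
    rw [dom_erase, Set.ncard_sdiff_singleton_of_mem ha, hdom p hp, Nat.add_sub_cancel]

theorem finite_of_isAntichain_of_ncard_dom_eq_succ {k : ℕ}
    (ih : ∀ D : Set (Cond A), IsAntichain Compatible D → (∀ p ∈ D, p.dom.ncard = k) → D.Finite)
    {C : Set (Cond A)} (hC : IsAntichain Compatible C) (hdom : ∀ p ∈ C, p.dom.ncard = k + 1) :
    C.Finite := by
  rcases C.eq_empty_or_nonempty with rfl | ⟨p₀, hp₀⟩
  · exact Set.finite_empty
  have hcover : C ⊆ insert p₀ (⋃ a ∈ p₀.dom, ⋃ b, {q ∈ C | q.1 a = some b}) := by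
    intro q hq
    rcases eq_or_ne q p₀ with rfl | hne
    · exact Set.mem_insert _ _
    obtain ⟨a, ha, b, hb⟩ := exists_mem_dom_of_not_compatible (hC hp₀ hq hne.symm)
    exact Set.mem_insert_of_mem _ <| Set.mem_biUnion ha <| Set.mem_iUnion.mpr ⟨b, hq, hb⟩
  refine (Set.Finite.insert _ <| p₀.2.biUnion fun a _ => Set.finite_iUnion fun b => ?_).subset
    hcover
  exact finite_of_isAntichain_of_apply_eq ih (hC.subset (Set.sep_subset _ _))
    (fun q hq => hdom q hq.1) a b fun q hq => hq.2

theorem finite_of_isAntichain {k : ℕ} {C : Set (Cond A)} (hC : IsAntichain Compatible C)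
    (hdom : ∀ p ∈ C, p.dom.ncard = k) : C.Finite := by
  induction k generalizing C with
  | zero => exact finite_of_isAntichain_of_ncard_dom_eq_zero hC hdom
  | succ k ih => exact finite_of_isAntichain_of_ncard_dom_eq_succ (fun D => @ih D) hC hdom

end Cond

/-- Every antichain in `Add(A,1)` all of whose elements have domain of cardinality exactly `k`
is finite. -/
theorem antichain_of_fixed_domain_size_finite {A : Type*} (k : ℕ) (C : Set (Cond A))
    (hanti : ∀ p ∈ C, ∀ q ∈ C, p ≠ q → ¬ Cond.Compatible p q)
    (hdom : ∀ p ∈ C, p.dom.ncard = k) :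
    C.Finite :=
  Cond.finite_of_isAntichain (fun p hp q hq => hanti p hp q hq) hdom
end

section
/- Let A be an arbitrary set and let N be a subset of Add(A,1) such that: (i) N is closed under extension, i.e., if p ∈ N and the condition q extends p then q ∈ N; and (ii) whenever every extension of a condition p has a further extension lying in N, then p ∈ N. Call p ∈ N minimal if no proper restriction of p belongs to N. Then for every natural number k, the set of minimal elements of N whose domain has cardinality exactly k is finite. -/
open Classical in
/-- The restriction `p ↾ s` of a condition `p` to a set `s`. -/
noncomputable def Cond.restrict {A : Type*} (p : Cond A) (s : Set A) : Cond A :=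
  ⟨fun a => if a ∈ s then p.1 a else none,
   p.2.subset fun a ha => by
     simp only [Set.mem_setOf_eq] at ha ⊢
     intro h
     apply ha
     split <;> simp [h]⟩

/-- `p` is a minimal element of `N` with respect to restriction: `p ∈ N` and no proper
restriction of `p` belongs to `N`. -/
def Cond.MinimalIn {A : Type*} (N : Set (Cond A)) (p : Cond A) : Prop :=
  p ∈ N ∧ ∀ s : Set A, s ⊂ p.dom → p.restrict s ∉ N


/-! If there were infinitely many minimal elements of size `k`, choose a condition `q` of largest
size that infinitely many of them extend. Then every coordinate outside `dom q` lies in the domain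
of only finitely many of these, so every extension `s` of `q` is compatible with one of them, `p`,
and `s ∪ p ∈ N` by (i). Hence `q ∈ N` by (ii); but `q` is a proper restriction of any such
`p ≠ q`, contradicting minimality of `p`. -/

namespace Cond

variable {A : Type*}

lemma ext {p q : Cond A} (h : ∀ a, p.1 a = q.1 a) : p = q :=
  Subtype.ext (funext h)

lemma mem_dom {p : Cond A} {a : A} : a ∈ p.dom ↔ p.1 a ≠ none := Iff.rfl

lemma dom_finite (p : Cond A) : p.dom.Finite := p.2

lemma Extends.dom_subset {p q : Cond A} (h : q.Extends p) : p.dom ⊆ q.dom := by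
  intro a ha
  obtain ⟨b, hb⟩ := Option.ne_none_iff_exists'.1 ha
  simp [mem_dom, h a b hb]

lemma Extends.eq_of_dom_subset {p q : Cond A} (h : q.Extends p) (hdom : q.dom ⊆ p.dom) :
    q = p := by
  refine ext fun a => ?_
  cases hp : p.1 a with
  | some b => exact h a b hp
  | none => by_contra hq; exact hdom hq hp

lemma Extends.dom_ssubset {p q : Cond A} (h : q.Extends p) (hne : q ≠ p) : p.dom ⊂ q.dom :=
  h.dom_subset.ssubset_of_ne fun hdom => hne (h.eq_of_dom_subset hdom.ge)

lemma restrict_apply_of_mem (p : Cond A) {s : Set A} {a : A} (ha : a ∈ s) :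
    (p.restrict s).1 a = p.1 a := by
  classical
  exact if_pos ha

lemma restrict_apply_of_notMem (p : Cond A) {s : Set A} {a : A} (ha : a ∉ s) :
    (p.restrict s).1 a = none := by
  classical
  exact if_neg ha

lemma dom_restrict (p : Cond A) (s : Set A) : (p.restrict s).dom = s ∩ p.dom := by
  ext a
  by_cases ha : a ∈ s
  · simp [mem_dom, restrict_apply_of_mem p ha, ha]
  · simp [mem_dom, restrict_apply_of_notMem p ha, ha]

lemma extends_restrict (p : Cond A) (s : Set A) : p.Extends (p.restrict s) := by
  intro a b hb
  by_cases ha : a ∈ s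
  · rwa [restrict_apply_of_mem p ha] at hb
  · simp [restrict_apply_of_notMem p ha] at hb

lemma Extends.restrict_dom {p q : Cond A} (h : q.Extends p) : q.restrict p.dom = p := by
  refine Extends.eq_of_dom_subset (fun a b hb => ?_)
    (by rw [dom_restrict]; exact Set.inter_subset_left)
  rw [restrict_apply_of_mem q (by simp [mem_dom, hb])]
  exact h a b hb

lemma finite_setOf_dom_subset {s : Set A} (hs : s.Finite) : {p : Cond A | p.dom ⊆ s}.Finite := by
  have : Finite s := hs.to_subtype
  refine Set.Finite.of_finite_image (f := fun p : Cond A => fun a : s => p.1 a) (Set.toFinite _) ?_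
  intro p hp q hq hpq
  refine ext fun a => ?_
  by_cases ha : a ∈ s
  · exact congrFun hpq ⟨a, ha⟩
  · rw [not_not.1 fun h => ha (hp h), not_not.1 fun h => ha (hq h)]

/-- Where `p` and `q` disagree, `p.union q` follows `p`. -/
def union (p q : Cond A) : Cond A :=
  ⟨fun a => (p.1 a).or (q.1 a), (p.dom_finite.union q.dom_finite).subset fun a ha => by
    by_contra h
    simp_all [mem_dom]⟩

lemma union_extends_left (p q : Cond A) : (p.union q).Extends p := by
  intro a b hb
  simp [union, hb]

lemma Compatible.union_extends_right {p q : Cond A} (h : p.Compatible q) :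
    (p.union q).Extends q := by
  intro a b hb
  cases hp : p.1 a with
  | none => simp [union, hp, hb]
  | some c => simp [union, hp, h a c b hp hb]

lemma compatible_of_dom_inter_subset {p q r : Cond A} (hp : p.Extends r) (hq : q.Extends r)
    (hdom : p.dom ∩ q.dom ⊆ r.dom) : p.Compatible q := by
  intro a x y hx hy
  have ha : a ∈ r.dom := hdom ⟨by simp [mem_dom, hx], by simp [mem_dom, hy]⟩
  obtain ⟨c, hc⟩ := Option.ne_none_iff_exists'.1 ha
  rw [hp a c hc] at hx
  rw [hq a c hc] at hy
  exact (Option.some_injective _ hx).symm.trans (Option.some_injective _ hy)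

lemma exists_infinite_extends_of_infinite_mem_dom {S : Set (Cond A)} {q : Cond A} {a : A}
    (ha : a ∉ q.dom) (h : {p ∈ S | p.Extends q ∧ a ∈ p.dom}.Infinite) :
    ∃ q' : Cond A, q'.dom.ncard = q.dom.ncard + 1 ∧ {p ∈ S | p.Extends q'}.Infinite := by
  set F := insert a q.dom
  obtain ⟨q', hq'⟩ :
      ∃ q', {p ∈ {p ∈ S | p.Extends q ∧ a ∈ p.dom} | p.restrict F = q'}.Infinite := by
    by_contra! hfin
    refine h (((finite_setOf_dom_subset (q.dom_finite.insert a)).biUnion fun q' _ => hfin q').subset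
      fun p hp => Set.mem_biUnion ?_ ⟨hp, rfl⟩)
    show (p.restrict F).dom ⊆ F
    rw [dom_restrict]
    exact Set.inter_subset_left
  obtain ⟨p, ⟨-, hpq, hap⟩, rfl⟩ := hq'.nonempty
  refine ⟨p.restrict F, ?_, hq'.mono ?_⟩
  · rw [dom_restrict, Set.inter_eq_left.2 (Set.insert_subset hap hpq.dom_subset),
      Set.ncard_insert_of_notMem ha q.dom_finite]
  · rintro r ⟨⟨hrS, -⟩, hr⟩
    exact ⟨hrS, hr ▸ r.extends_restrict F⟩

lemma exists_infinite_extends_of_ncard_le {S : Set (Cond A)} (hS : S.Infinite) {k : ℕ}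
    (hk : ∀ p ∈ S, p.dom.ncard ≤ k) :
    ∃ q : Cond A, {p ∈ S | p.Extends q}.Infinite ∧
      ∀ a ∉ q.dom, {p ∈ S | p.Extends q ∧ a ∈ p.dom}.Finite := by
  classical
  let P n := ∃ q : Cond A, q.dom.ncard = n ∧ {p ∈ S | p.Extends q}.Infinite
  have hP0 : P 0 := ⟨⟨fun _ => none, by simp⟩, by simp [dom],
    hS.mono fun p hp => ⟨hp, fun _ _ h => by cases h⟩⟩
  obtain ⟨q, hqn, hq⟩ := Nat.findGreatest_spec (Nat.zero_le k) hP0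
  refine ⟨q, hq, fun a ha => by_contra fun hinf => ?_⟩
  obtain ⟨q', hq'n, hq'⟩ := exists_infinite_extends_of_infinite_mem_dom ha hinf
  obtain ⟨p, hpS, hpq'⟩ := hq'.nonempty
  have hq'k : q'.dom.ncard ≤ k :=
    (Set.ncard_le_ncard hpq'.dom_subset p.dom_finite).trans (hk p hpS)
  exact Nat.findGreatest_is_greatest (P := P) (by omega) hq'k ⟨q', rfl, hq'⟩

lemma mem_of_infinite_extends {N S : Set (Cond A)}
    (hup : ∀ p ∈ N, ∀ q : Cond A, q.Extends p → q ∈ N)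
    (hdense : ∀ p : Cond A,
      (∀ q : Cond A, q.Extends p → ∃ r : Cond A, r.Extends q ∧ r ∈ N) → p ∈ N)
    (hSN : S ⊆ N) {q : Cond A} (hq : {p ∈ S | p.Extends q}.Infinite)
    (hfin : ∀ a ∉ q.dom, {p ∈ S | p.Extends q ∧ a ∈ p.dom}.Finite) : q ∈ N := by
  refine hdense q fun s hs => ?_
  have hbad : (⋃ a ∈ s.dom \ q.dom, {p ∈ S | p.Extends q ∧ a ∈ p.dom}).Finite :=
    (s.dom_finite.sdiff).biUnion fun a ha => hfin a ha.2
  obtain ⟨p, ⟨hpS, hpq⟩, hp⟩ := (hq.sdiff hbad).nonempty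
  have hdom : s.dom ∩ p.dom ⊆ q.dom := fun a ⟨has, hap⟩ =>
    by_contra fun haq => hp (Set.mem_biUnion ⟨has, haq⟩ ⟨hpS, hpq, hap⟩)
  have hcompat : s.Compatible p := compatible_of_dom_inter_subset hs hpq hdom
  exact ⟨s.union p, s.union_extends_left p, hup p (hSN hpS) _ hcompat.union_extends_right⟩

end Cond

/-- Let `N ⊆ Add(A,1)` be (i) closed under extension, and such that (ii) whenever every
extension of a condition `p` has a further extension lying in `N`, then `p ∈ N`. Then for every
natural number `k`, the set of minimal elements of `N` (no proper restriction belongs to `N`)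
whose domain has cardinality exactly `k` is finite. -/
theorem minimal_elements_of_fixed_size_finite {A : Type*} (N : Set (Cond A))
    (hup : ∀ p ∈ N, ∀ q : Cond A, q.Extends p → q ∈ N)
    (hdense : ∀ p : Cond A,
      (∀ q : Cond A, q.Extends p → ∃ r : Cond A, r.Extends q ∧ r ∈ N) → p ∈ N)
    (k : ℕ) :
    {p : Cond A | Cond.MinimalIn N p ∧ p.dom.ncard = k}.Finite := by
  by_contra hinf
  obtain ⟨q, hq, hfin⟩ := Cond.exists_infinite_extends_of_ncard_le hinf fun p hp => hp.2.le
  have hqN : q ∈ N := Cond.mem_of_infinite_extends hup hdense (fun p hp => hp.1.1) hq hfin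
  obtain ⟨p, ⟨⟨hpmin, -⟩, hpq⟩, hpne⟩ := (hq.sdiff (Set.finite_singleton q)).nonempty
  exact hpmin.2 q.dom (hpq.dom_ssubset hpne) (by rwa [hpq.restrict_dom])
end

section
/- If A is a set such that the set [A]^{<ω} of finite subsets of A is Dedekind-infinite (in particular, if A is infinite), then the topological space 2^A is not extremally disconnected: there is an open subset of 2^A whose closure is not open. -/
/-- If `A` is a set such that the set `[A]^{<ω}` of finite subsets of `A` is Dedekind-infinite
(there is an injection from `ℕ` into the finite subsets of `A`), then the Cantor cube `2^A`
(functions `A → Bool` with the product topology, `Bool` discrete) is not extremally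
disconnected: there is an open subset of `2^A` whose closure is not open. -/
theorem not_extremally_disconnected_of_dedekind_infinite {A : Type*}
    (h : ∃ f : ℕ → Finset A, Function.Injective f) :
    ∃ U : Set (A → Bool), IsOpen U ∧ ¬ IsOpen (closure U) := by
  classical
  obtain ⟨f, hf⟩ := h
  have hFinsetInf : Infinite (Finset A) := Infinite.of_injective f hf
  have hAinf : Infinite A := by
    by_contra hA
    rw [not_infinite_iff_finite] at hA
    haveI := Fintype.ofFinite A
    exact not_finite (Finset A)
  set e : ℕ → A := fun n => Infinite.natEmbedding A n with he_def
  have he : Function.Injective e := (Infinite.natEmbedding A).injective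
  -- basic open pieces
  set V : ℕ → Set (A → Bool) := fun n =>
    {x | x (e n) = true} ∩ ⋂ k ∈ Finset.range n, {x | x (e k) = false} with hV_def
  have hVmem : ∀ n (x : A → Bool),
      x ∈ V n ↔ (x (e n) = true ∧ ∀ k < n, x (e k) = false) := by
    intro n x
    simp [hV_def, Set.mem_iInter]
  have hVopen : ∀ n, IsOpen (V n) := by
    intro n
    apply IsOpen.inter
    · show IsOpen ((fun x : A → Bool => x (e n)) ⁻¹' {b | b = true})
      exact IsOpen.preimage (continuous_apply (e n)) (isOpen_discrete _)
    · apply isOpen_biInter_finset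
      intro k _
      show IsOpen ((fun x : A → Bool => x (e k)) ⁻¹' {b | b = false})
      exact IsOpen.preimage (continuous_apply (e k)) (isOpen_discrete _)
  set U : Set (A → Bool) := ⋃ n, V (2 * n) with hU_def
  set W : Set (A → Bool) := ⋃ n, V (2 * n + 1) with hW_def
  set Z : Set (A → Bool) := {x | ∀ n, x (e n) = false} with hZ_def
  have hUopen : IsOpen U := isOpen_iUnion fun n => hVopen _
  have hWopen : IsOpen W := isOpen_iUnion fun n => hVopen _
  -- complement of U ∪ Z is W
  have hcompl : (U ∪ Z)ᶜ = W := by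
    ext x
    constructor
    · intro hx
      rw [Set.mem_compl_iff, Set.mem_union, not_or] at hx
      obtain ⟨hxU, hxZ⟩ := hx
      have hex : ∃ n, x (e n) = true := by
        by_contra hc
        push_neg at hc
        exact hxZ fun n => by
          have := hc n
          simpa using this
      set m := Nat.find hex with hm_def
      have hm : x (e m) = true := Nat.find_spec hex
      have hmin : ∀ k < m, x (e k) = false := by
        intro k hk
        have := Nat.find_min hex hk
        simpa using this
      rcases Nat.even_or_odd m with ⟨j, hj⟩ | ⟨j, hj⟩
      · exfalso
        apply hxU
        refine Set.mem_iUnion.2 ⟨j, (hVmem _ x).2 ⟨?_, ?_⟩⟩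
        · rw [show 2 * j = m by omega]; exact hm
        · intro k hk; exact hmin k (by omega)
      · refine Set.mem_iUnion.2 ⟨j, (hVmem _ x).2 ⟨?_, ?_⟩⟩
        · rw [show 2 * j + 1 = m by omega]; exact hm
        · intro k hk; exact hmin k (by omega)
    · intro hx
      obtain ⟨n, hn⟩ := Set.mem_iUnion.1 hx
      rw [hVmem] at hn
      rw [Set.mem_compl_iff, Set.mem_union, not_or]
      constructor
      · intro hxU
        obtain ⟨j, hj⟩ := Set.mem_iUnion.1 hxU
        rw [hVmem] at hj
        rcases lt_trichotomy (2 * j) (2 * n + 1) with hlt | heq | hgt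
        · have := hn.2 _ hlt
          rw [hj.1] at this; exact Bool.noConfusion this
        · omega
        · have := hj.2 _ hgt
          rw [hn.1] at this; exact Bool.noConfusion this
      · intro hxZ
        have := hxZ (2 * n + 1)
        rw [hn.1] at this; exact Bool.noConfusion this
  have hclosed : IsClosed (U ∪ Z) := by
    rw [← isOpen_compl_iff, hcompl]; exact hWopen
  -- the all-false point is in the closure of U
  set x₀ : A → Bool := fun _ => false with hx₀_def
  have hx₀cl : x₀ ∈ closure U := by
    rw [mem_closure_iff]
    intro o ho hx₀o
    obtain ⟨I, u, h1, h2⟩ := (isOpen_pi_iff.1 ho) x₀ hx₀o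
    have hinf : (Set.range fun n => e (2 * n)).Infinite :=
      Set.infinite_range_of_injective (fun a b hab => by
        have := he hab; omega)
    obtain ⟨a, ⟨n, rfl⟩, haI⟩ := hinf.exists_notMem_finset I
    set y : A → Bool := Function.update x₀ (e (2 * n)) true with hy_def
    refine ⟨y, h2 ?_, Set.mem_iUnion.2 ⟨n, (hVmem _ y).2 ⟨?_, ?_⟩⟩⟩
    · intro a haI'
      have hne : a ≠ e (2 * n) := fun hc => haI (by simpa [hc] using haI')
      rw [hy_def]
      simpa [Function.update_of_ne hne] using (h1 a haI').2
    · simp [hy_def]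
    · intro k hk
      have hne : e k ≠ e (2 * n) := fun hc => by have := he hc; omega
      simp [hy_def, Function.update_of_ne hne, hx₀_def]
  refine ⟨U, hUopen, ?_⟩
  intro hcl
  obtain ⟨I, u, h1, h2⟩ := (isOpen_pi_iff.1 hcl) x₀ hx₀cl
  have hinf : (Set.range fun n => e (2 * n + 1)).Infinite :=
    Set.infinite_range_of_injective (fun a b hab => by
      have := he hab; omega)
  obtain ⟨a, ⟨n, rfl⟩, haI⟩ := hinf.exists_notMem_finset I
  set y : A → Bool := Function.update x₀ (e (2 * n + 1)) true with hy_def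
  have hyW : y ∈ W := by
    refine Set.mem_iUnion.2 ⟨n, (hVmem _ y).2 ⟨?_, ?_⟩⟩
    · simp [hy_def]
    · intro k hk
      have hne : e k ≠ e (2 * n + 1) := fun hc => by have := he hc; omega
      simp [hy_def, Function.update_of_ne hne, hx₀_def]
  have hycl : y ∈ closure U := by
    apply h2
    intro a haI'
    have hne : a ≠ e (2 * n + 1) := fun hc => haI (by simpa [hc] using haI')
    rw [hy_def]
    simpa [Function.update_of_ne hne] using (h1 a haI').2
  have hyUZ : y ∈ U ∪ Z := closure_minimal Set.subset_union_left hclosed hycl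
  have : y ∈ (U ∪ Z)ᶜ := hcompl ▸ hyW
  exact this hyUZ
end
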